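/- arXiv:quant-ph/0606181 — 3 statements merged into one kernel-verified Lean document; each statement's English description precedes it below -/
import Mathlib

section
/- Let j > 0 be a real number and let X₃(j) be the 3×3 real matrix X₃(j) = (1/(j(j+1)(2j+1))) · [[j+1, -(j+1)(2j+1), j(j+1)(2j+3)], [-(j+1)(2j-1), (j²+j-1)(2j+1), j(2j+3)], [j(j+1)(2j-1), j(2j+1), j]]. Then X₃(j) · X₃(j) = I, the 3×3 identity matrix (in particular X₃(j) is its own inverse). -/
set_option maxHeartbeats 1000000


/-- The 3×3 matrix `X₃(j)` relating partial transposition of Werner-like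
SO(3)-invariant projectors to isotropic-like ones for spins `j_A = 1`, `j_B = j`. -/
noncomputable def X₃ (j : ℝ) : Matrix (Fin 3) (Fin 3) ℝ :=
  (1 / (j * (j + 1) * (2 * j + 1))) •
    !![j + 1, -((j + 1) * (2 * j + 1)), j * (j + 1) * (2 * j + 3);
       -((j + 1) * (2 * j - 1)), (j ^ 2 + j - 1) * (2 * j + 1), j * (2 * j + 3);
       j * (j + 1) * (2 * j - 1), j * (2 * j + 1), j]

/-- `X₃(j) · X₃(j) = I`, so `X₃(j)` is its own inverse. -/
theorem X₃_sq_eq_one (j : ℝ) (hj : 0 < j) : X₃ j * X₃ j = 1 := by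
  have h1 : j ≠ 0 := ne_of_gt hj
  have h2 : j + 1 ≠ 0 := by positivity
  have h3 : 2 * j + 1 ≠ 0 := by positivity
  unfold X₃
  rw [Matrix.smul_mul, Matrix.mul_smul, smul_smul, Matrix.mul_fin_three]
  ext i k
  fin_cases i <;> fin_cases k <;>
    simp [Matrix.one_apply] <;> first
      | (right; ring)
      | (field_simp; ring)
end

section
/- Let j > 0 be a real number, let X₃(j) be the 3×3 real matrix X₃(j) = (1/(j(j+1)(2j+1))) · [[j+1, -(j+1)(2j+1), j(j+1)(2j+3)], [-(j+1)(2j-1), (j²+j-1)(2j+1), j(2j+3)], [j(j+1)(2j-1), j(2j+1), j]], and let w₀ = 2j−1, w₁ = 2j+1, w₂ = 2j+3 (the dimensions 2J+1 of the spin-J multiplets for J = j−1, j, j+1). Then for all indices J, J' ∈ {0,1,2}, w_J · X₃(j)_{JJ'} = w_{J'} · X₃(j)_{J'J}. -/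
/-- The weights `w₀ = 2j - 1`, `w₁ = 2j + 1`, `w₂ = 2j + 3` (the multiplet
dimensions `2J+1` for the total spins `J = j - 1`, `j`, `j + 1`). -/
noncomputable def w₃ (j : ℝ) : Fin 3 → ℝ := ![2 * j - 1, 2 * j + 1, 2 * j + 3]

/-- The symmetry relation `(2J+1) X_{JJ'} = (2J'+1) X_{J'J}` for `j_A = 1`. -/
theorem X₃_weighted_symm (j : ℝ) (hj : 0 < j) (J J' : Fin 3) :
    w₃ j J * X₃ j J J' = w₃ j J' * X₃ j J' J := by
  fin_cases J <;> fin_cases J' <;>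
    simp [X₃, w₃, Matrix.smul_apply] <;> ring
end

section
/- Let j ≥ 1 be a real number, let X₃(j) be the 3×3 real matrix X₃(j) = (1/(j(j+1)(2j+1))) · [[j+1, -(j+1)(2j+1), j(j+1)(2j+3)], [-(j+1)(2j-1), (j²+j-1)(2j+1), j(2j+3)], [j(j+1)(2j-1), j(2j+1), j]], and let q₀, q₁, q₂ ≥ 0 be real numbers with q₀ + q₁ + q₂ = 1. Then all three components of the row vector (q₀, q₁, q₂) · X₃(j) are nonnegative if and only if the following two inequalities hold: q₀(2j+1) − q₁(j²−1) ≤ j, and q₁(2j²+j−1) − q₀(1−2j²+j) ≤ j(2j−1). In particular the component with index 2 of (q₀,q₁,q₂)·X₃(j) is automatically nonnegative. -/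
open Matrix BigOperators

/-- For fidelities `q₀, q₁, q₂ ≥ 0` with `q₀ + q₁ + q₂ = 1` and `j ≥ 1`, the PPT
condition `(q₀,q₁,q₂)·X₃(j) ≥ 0` holds iff `q₀(2j+1) − q₁(j²−1) ≤ j` and
`q₁(2j²+j−1) − q₀(1−2j²+j) ≤ j(2j−1)`; moreover the component with index 2 of
`(q₀,q₁,q₂)·X₃(j)` is automatically nonnegative. -/
theorem ppt_iff_spin_one (j : ℝ) (hj : 1 ≤ j) (q : Fin 3 → ℝ)
    (hq : ∀ J, 0 ≤ q J) (hsum : q 0 + q 1 + q 2 = 1) :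
    ((∀ J' : Fin 3, 0 ≤ ∑ J : Fin 3, q J * X₃ j J J') ↔
      (q 0 * (2 * j + 1) - q 1 * (j ^ 2 - 1) ≤ j ∧
        q 1 * (2 * j ^ 2 + j - 1) - q 0 * (1 - 2 * j ^ 2 + j) ≤ j * (2 * j - 1))) ∧
      0 ≤ ∑ J : Fin 3, q J * X₃ j J 2 := by
  have hj0 : (0:ℝ) < j := by linarith
  have hd : (0:ℝ) < j * (j + 1) * (2 * j + 1) := by positivity
  have hj0' : j ≠ 0 := ne_of_gt hj0
  have hj1' : j + 1 ≠ 0 := by positivity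
  have hj2' : 2 * j + 1 ≠ 0 := by positivity
  have hq0 := hq 0
  have hq1 := hq 1
  have hq2 := hq 2
  have hq2' : q 2 = 1 - q 0 - q 1 := by linarith
  have e0 : ∑ J : Fin 3, q J * X₃ j J 0 =
      (q 0 * (j + 1) + q 1 * (-((j + 1) * (2 * j - 1))) +
        q 2 * (j * (j + 1) * (2 * j - 1))) / (j * (j + 1) * (2 * j + 1)) := by
    simp [Fin.sum_univ_three, X₃]
    field_simp
    try ring
    try exact Or.inl trivial
  have e1 : ∑ J : Fin 3, q J * X₃ j J 1 =
      (q 0 * (-((j + 1) * (2 * j + 1))) + q 1 * ((j ^ 2 + j - 1) * (2 * j + 1)) +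
        q 2 * (j * (2 * j + 1))) / (j * (j + 1) * (2 * j + 1)) := by
    simp [Fin.sum_univ_three, X₃]
    field_simp
    try ring
    try exact Or.inl trivial
  have e2 : ∑ J : Fin 3, q J * X₃ j J 2 =
      (q 0 * (j * (j + 1) * (2 * j + 3)) + q 1 * (j * (2 * j + 3)) +
        q 2 * j) / (j * (j + 1) * (2 * j + 1)) := by
    simp [Fin.sum_univ_three, X₃]
    field_simp
    try ring
    try exact Or.inl trivial
  have h2 : (0:ℝ) ≤ ∑ J : Fin 3, q J * X₃ j J 2 := by
    rw [e2, le_div_iff₀ hd]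
    nlinarith [mul_nonneg hq0 (by nlinarith : (0:ℝ) ≤ j * (j + 1) * (2 * j + 3)),
      mul_nonneg hq1 (by nlinarith : (0:ℝ) ≤ j * (2 * j + 3)),
      mul_nonneg hq2 (by linarith : (0:ℝ) ≤ j)]
  refine ⟨⟨fun h => ?_, fun h J' => ?_⟩, h2⟩
  · have h0 := h 0
    have h1 := h 1
    rw [e0, le_div_iff₀ hd] at h0
    rw [e1, le_div_iff₀ hd] at h1
    constructor
    · nlinarith [h1, hq2']
    · nlinarith [h0, hq2']
  · have g0 : (0:ℝ) ≤ ∑ J : Fin 3, q J * X₃ j J 0 := by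
      rw [e0, le_div_iff₀ hd]
      nlinarith [h.2, hq2']
    have g1 : (0:ℝ) ≤ ∑ J : Fin 3, q J * X₃ j J 1 := by
      rw [e1, le_div_iff₀ hd]
      nlinarith [h.1, hq2']
    fin_cases J'
    · exact g0
    · exact g1
    · exact h2
end
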